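/- arXiv:2006.02028 — 5 statements merged into one kernel-verified Lean document; each statement's English description precedes it below -/
import Mathlib

section
/- Let G be a simply connected real Lie group whose underlying group is nilpotent, and let L be a nontrivial connected normal subgroup of G (that is, the underlying set of L is a connected subset of G and L ≠ {1}). Then L intersects the identity component of the center of G nontrivially: there exists x ≠ 1 with x ∈ L such that x lies in the connected component of the identity of the topological group Z(G), where Z(G) = Subgroup.center G carries the subspace topology. (Corollary 2.3 of the paper.) -/
/-!
Starting from `L`, repeatedly take all commutators `⁅g, x⁆` with `g ∈ G`. Each step maps a
preconnected set containing `1` to a union of continuous images of it, all containing `1`, so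
the sets stay preconnected; by normality they stay inside `L`; and the `n`-th set lies in the
`n`-th term of the lower central series, so it is eventually `{1}`. The last set different
from `{1}` commutes with all of `G`: it is a connected subset of the center joining `1` to a
nontrivial element of `L`.
-/

open scoped commutatorElement

section IteratedCommutators

variable {G : Type*} [Group G]

def iteratedCommutators (S : Set G) : ℕ → Set G
  | 0 => S
  | n + 1 => ⋃ g : G, (⁅g, ·⁆) '' iteratedCommutators S n

variable {S : Set G}

theorem one_mem_iteratedCommutators (h1 : (1 : G) ∈ S) :
    ∀ n, (1 : G) ∈ iteratedCommutators S n
  | 0 => h1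
  | n + 1 =>
    Set.mem_iUnion.2 ⟨1, 1, one_mem_iteratedCommutators h1 n, commutatorElement_one_right 1⟩

theorem iteratedCommutators_subset_lowerCentralSeries :
    ∀ n, iteratedCommutators S n ⊆ ((⊤ : Subgroup G).lowerCentralSeries n : Set G)
  | 0 => fun _ _ => Subgroup.mem_top _
  | n + 1 => by
    rintro _ ⟨_, ⟨g, rfl⟩, x, hx, rfl⟩
    rw [Subgroup.lowerCentralSeries_succ, Subgroup.commutator_comm]
    exact Subgroup.commutator_mem_commutator (Subgroup.mem_top g)
      (iteratedCommutators_subset_lowerCentralSeries n hx)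

theorem iteratedCommutators_subset_of_normal {H : Subgroup G} [H.Normal] (hS : S ⊆ H) :
    ∀ n, iteratedCommutators S n ⊆ H
  | 0 => hS
  | n + 1 => by
    rintro _ ⟨_, ⟨g, rfl⟩, x, hx, rfl⟩
    exact Subgroup.commutator_le_right ⊤ H
      (Subgroup.commutator_mem_commutator (Subgroup.mem_top g)
        (iteratedCommutators_subset_of_normal hS n hx))

theorem iteratedCommutators_subset_center_of_succ_subset_one {n : ℕ}
    (h : iteratedCommutators S (n + 1) ⊆ {1}) : iteratedCommutators S n ⊆ Subgroup.center G :=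
  fun x hx => Subgroup.mem_center_iff.2 fun g =>
    commutatorElement_eq_one_iff_mul_comm.1 (h (Set.mem_iUnion.2 ⟨g, x, hx, rfl⟩))

theorem exists_iteratedCommutators_subset_center_of_not_subset_one [Group.IsNilpotent G]
    (hS : ¬S ⊆ {1}) :
    ∃ n, iteratedCommutators S n ⊆ Subgroup.center G ∧ ¬iteratedCommutators S n ⊆ {1} := by
  classical
  have hterminates : ∃ n, iteratedCommutators S n ⊆ {1} := by
    obtain ⟨n, hn⟩ := Subgroup.nilpotent_iff_lowerCentralSeries.1 ‹Group.IsNilpotent G›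
    refine ⟨n, fun x hx => ?_⟩
    simpa [hn] using iteratedCommutators_subset_lowerCentralSeries n hx
  have hpos : Nat.find hterminates ≠ 0 := by
    rw [Ne, Nat.find_eq_zero]
    exact hS
  obtain ⟨n, hn⟩ := Nat.exists_eq_succ_of_ne_zero hpos
  refine ⟨n, iteratedCommutators_subset_center_of_succ_subset_one ?_,
    Nat.find_min hterminates ?_⟩
  · simpa only [hn] using Nat.find_spec hterminates
  · omega

theorem IsPreconnected.iteratedCommutators [TopologicalSpace G] [IsTopologicalGroup G]
    (hS : IsPreconnected S) (h1 : (1 : G) ∈ S) : ∀ n, IsPreconnected (iteratedCommutators S n)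
  | 0 => hS
  | n + 1 => by
    refine isPreconnected_iUnion ⟨1, Set.mem_iInter.2 fun g => ⟨1, ?_, ?_⟩⟩ fun g => ?_
    · exact one_mem_iteratedCommutators h1 n
    · exact commutatorElement_one_right g
    · refine (hS.iteratedCommutators h1 n).image _ (Continuous.continuousOn ?_)
      simp only [commutatorElement_def]
      fun_prop

end IteratedCommutators

theorem Subtype.mem_connectedComponent_of_isPreconnected {X : Type*} [TopologicalSpace X]
    {p : X → Prop} {s : Set X} (hs : IsPreconnected s) (hsp : ∀ x ∈ s, p x) {x y : Subtype p}
    (hx : (x : X) ∈ s) (hy : (y : X) ∈ s) : y ∈ connectedComponent x := by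
  have himage : Subtype.val '' (Subtype.val ⁻¹' s : Set (Subtype p)) = s :=
    Set.image_preimage_eq_of_subset fun x hx => ⟨⟨x, hsp x hx⟩, rfl⟩
  have hpre : IsPreconnected (Subtype.val ⁻¹' s : Set (Subtype p)) :=
    Topology.IsInducing.subtypeVal.isPreconnected_image.1 (himage.symm ▸ hs)
  exact hpre.subset_connectedComponent hx hy

theorem connected_normal_subgroup_inter_center_identityComponent_general
    {G : Type*} [TopologicalSpace G] [Group G] [IsTopologicalGroup G] [Group.IsNilpotent G]
    (L : Subgroup G) [L.Normal] (hL : L ≠ ⊥) (hLconn : IsConnected (L : Set G)) :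
    ∃ x : Subgroup.center G, (x : G) ≠ 1 ∧ (x : G) ∈ L ∧
      x ∈ connectedComponent (1 : Subgroup.center G) := by
  have hLne : ¬(L : Set G) ⊆ {1} := fun h => hL ((Subgroup.eq_bot_iff_forall L).2 h)
  obtain ⟨n, hcenter, hne⟩ := exists_iteratedCommutators_subset_center_of_not_subset_one hLne
  obtain ⟨x, hx, hx1⟩ := Set.not_subset.1 hne
  refine ⟨⟨x, hcenter hx⟩, hx1, iteratedCommutators_subset_of_normal le_rfl n hx, ?_⟩
  exact Subtype.mem_connectedComponent_of_isPreconnected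
    (hLconn.isPreconnected.iteratedCommutators L.one_mem n) (fun _ hy => hcenter hy)
    (one_mem_iteratedCommutators L.one_mem n) hx

/-- **Corollary 2.3.** Let `G` be a simply connected (real) Lie group whose underlying group is
nilpotent, and let `L` be a non-trivial connected normal subgroup of `G`. Then `L` intersects
the identity component of the center of `G` non-trivially. -/
theorem connected_normal_subgroup_inter_center_identityComponent
    {E : Type*} [NormedAddCommGroup E] [NormedSpace ℝ E] [FiniteDimensional ℝ E]
    {G : Type*} [TopologicalSpace G] [ChartedSpace E G] [Group G] [IsTopologicalGroup G]
    [LieGroup (modelWithCornersSelf ℝ E) (⊤ : ℕ∞) G]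
    [SimplyConnectedSpace G] [Group.IsNilpotent G]
    (L : Subgroup G) [L.Normal] (hL : L ≠ ⊥) (hLconn : IsConnected (L : Set G)) :
    ∃ x : Subgroup.center G, (x : G) ≠ 1 ∧ (x : G) ∈ L ∧
      x ∈ connectedComponent (1 : Subgroup.center G) :=
  connected_normal_subgroup_inter_center_identityComponent_general L hL hLconn
end

section
/- Let G be a group and L a normal subgroup of G, and let G ×_L G := {(a₁,a₂) ∈ G × G : a₁a₂⁻¹ ∈ L} be the relatively independent self-product, a subgroup of G × G. Then the commutator subgroup of G ×_L G equals [G,G] ×_{⁅G,L⁆} [G,G] := {(a₁,a₂) ∈ [G,G] × [G,G] : a₁a₂⁻¹ ∈ ⁅G,L⁆}, as subgroups of G × G. (Lemma 2.7 of the paper; stated there for nilpotent Lie groups, but the assertion and proof are purely group-theoretic.) -/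
/-!
Modulo `⁅G, L⁆` the subgroup `L` becomes central, and a commutator does not see central factors
of its entries; hence for `(l a, a), (m b, b) ∈ G ×_L G` the two coordinates `⁅l a, m b⁆` and
`⁅a, b⁆` of their commutator agree modulo `⁅G, L⁆`. Conversely, every element of the right-hand
side factors as `(c, 1) * (b, b)` with `c ∈ ⁅G, L⁆` and `b ∈ [G, G]`, and both factors lie in the
commutator subgroup of `G ×_L G`: `(⁅g, h⁆, ⁅g, h⁆) = ⁅(g, g), (h, h)⁆` and
`(⁅g, l⁆, 1) = ⁅(g, g), (l, 1)⁆`.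
-/

/-- The relatively independent self-product `G ×_L G` of a group `G` over a normal
subgroup `L`, i.e. the subgroup `{(a₁, a₂) ∈ G × G : a₁ * a₂⁻¹ ∈ L}` of `G × G`. -/
def relProd {G : Type*} [Group G] (L : Subgroup G) [hN : L.Normal] : Subgroup (G × G) where
  carrier := {p : G × G | p.1 * p.2⁻¹ ∈ L}
  one_mem' := by simpa using L.one_mem
  mul_mem' := by
    rintro ⟨a₁, a₂⟩ ⟨b₁, b₂⟩ ha hb
    have h : (a₁ * b₁) * (a₂ * b₂)⁻¹ = (a₁ * (b₁ * b₂⁻¹) * a₁⁻¹) * (a₁ * a₂⁻¹) := by group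
    simp only [Set.mem_setOf_eq] at ha hb
    show a₁ * b₁ * (a₂ * b₂)⁻¹ ∈ L
    rw [h]
    exact mul_mem (hN.conj_mem _ hb a₁) ha
  inv_mem' := by
    rintro ⟨a₁, a₂⟩ ha
    simp only [Set.mem_setOf_eq] at ha
    have h : a₁⁻¹ * (a₂⁻¹)⁻¹ = a₁⁻¹ * (a₁ * a₂⁻¹)⁻¹ * (a₁⁻¹)⁻¹ := by group
    show a₁⁻¹ * (a₂⁻¹)⁻¹ ∈ L
    rw [h]
    exact hN.conj_mem _ (L.inv_mem ha) a₁⁻¹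

open scoped commutatorElement

open Subgroup

section Commutator

variable {G : Type*} [Group G]

lemma commutatorElement_mul_left_of_mem_center {z : G} (hz : z ∈ center G) (a b : G) :
    ⁅z * a, b⁆ = ⁅a, b⁆ := by
  rw [mem_center_iff] at hz
  calc ⁅z * a, b⁆ = z * (a * b * a⁻¹) * z⁻¹ * b⁻¹ := by group
    _ = (a * b * a⁻¹) * z * z⁻¹ * b⁻¹ := by rw [← hz]
    _ = ⁅a, b⁆ := by group

lemma commutatorElement_mul_mul_of_mem_center {z w : G} (hz : z ∈ center G)
    (hw : w ∈ center G) (a b : G) : ⁅z * a, w * b⁆ = ⁅a, b⁆ := by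
  rw [commutatorElement_mul_left_of_mem_center hz, ← commutatorElement_inv,
    commutatorElement_mul_left_of_mem_center hw, commutatorElement_inv]

lemma map_le_center_quotient_commutator_top (L : Subgroup G) [L.Normal] :
    L.map (QuotientGroup.mk' ⁅⊤, L⁆) ≤ center (G ⧸ ⁅(⊤ : Subgroup G), L⁆) := by
  rw [← commutator_top_left_eq_bot_iff_le_center,
    ← map_top_of_surjective _ (QuotientGroup.mk'_surjective _), ← map_commutator,
    QuotientGroup.map_mk'_self]

lemma commutatorElement_mul_mul_div_mem_commutator_top (L : Subgroup G) [L.Normal] {l m : G}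
    (hl : l ∈ L) (hm : m ∈ L) (a b : G) : ⁅l * a, m * b⁆ * ⁅a, b⁆⁻¹ ∈ ⁅(⊤ : Subgroup G), L⁆ := by
  have central {x : G} (hx : x ∈ L) : QuotientGroup.mk' ⁅⊤, L⁆ x ∈ center _ :=
    map_le_center_quotient_commutator_top L (mem_map_of_mem _ hx)
  rw [← QuotientGroup.eq_one_iff, ← QuotientGroup.mk'_apply, map_mul, map_inv,
    map_commutatorElement, map_commutatorElement, map_mul, map_mul,
    commutatorElement_mul_mul_of_mem_center (central hl) (central hm), mul_inv_cancel]

end Commutator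

section RelProd

variable {G : Type*} [Group G] (L : Subgroup G) [L.Normal]

lemma mem_relProd {p : G × G} : p ∈ relProd L ↔ p.1 * p.2⁻¹ ∈ L := Iff.rfl

lemma commutator_relProd_le :
    ⁅relProd L, relProd L⁆ ≤
      relProd ⁅(⊤ : Subgroup G), L⁆ ⊓ (commutator G).prod (commutator G) := by
  rw [commutator_le]
  rintro ⟨a₁, a₂⟩ ha ⟨b₁, b₂⟩ hb
  refine mem_inf.mpr ⟨?_, mem_prod.mpr ⟨commutator_mem_commutator (mem_top _) (mem_top _),
    commutator_mem_commutator (mem_top _) (mem_top _)⟩⟩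
  rw [mem_relProd] at ha hb ⊢
  have h := commutatorElement_mul_mul_div_mem_commutator_top L ha hb a₂ b₂
  rwa [inv_mul_cancel_right, inv_mul_cancel_right] at h

lemma mk_self_mem_commutator_relProd {b : G} (hb : b ∈ commutator G) :
    (b, b) ∈ ⁅relProd L, relProd L⁆ := by
  let Δ : G →* G × G := (MonoidHom.id G).prod (MonoidHom.id G)
  suffices commutator G ≤ ⁅relProd L, relProd L⁆.comap Δ from this hb
  rw [commutator_def, commutator_le]
  intro g _ h _
  have hΔ (x : G) : Δ x ∈ relProd L := by simp [mem_relProd, Δ]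
  rw [mem_comap, map_commutatorElement]
  exact commutator_mem_commutator (hΔ g) (hΔ h)

lemma mk_one_mem_commutator_relProd {c : G} (hc : c ∈ ⁅(⊤ : Subgroup G), L⁆) :
    (c, 1) ∈ ⁅relProd L, relProd L⁆ := by
  suffices ⁅(⊤ : Subgroup G), L⁆ ≤ ⁅relProd L, relProd L⁆.comap (MonoidHom.inl G G) from this hc
  rw [commutator_le]
  intro g _ l hl
  have hgg : (g, g) ∈ relProd L := by simp [mem_relProd]
  have hl1 : (l, 1) ∈ relProd L := by simpa [mem_relProd] using hl
  have hcomm : MonoidHom.inl G G ⁅g, l⁆ = ⁅(g, g), (l, 1)⁆ := by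
    simp [commutatorElement_def]
  rw [mem_comap, hcomm]
  exact commutator_mem_commutator hgg hl1

theorem commutator_relProd_eq :
    ⁅relProd L, relProd L⁆ =
      relProd ⁅(⊤ : Subgroup G), L⁆ ⊓ (commutator G).prod (commutator G) := by
  refine le_antisymm (commutator_relProd_le L) ?_
  rintro ⟨p₁, p₂⟩ ⟨hp, -, hp₂⟩
  have hsplit : (p₁, p₂) = (p₁ * p₂⁻¹, 1) * (p₂, p₂) := by simp
  rw [hsplit]
  exact mul_mem (mk_one_mem_commutator_relProd L hp) (mk_self_mem_commutator_relProd L hp₂)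

end RelProd

/-- **Lemma 2.7.** The commutator subgroup of `G ×_L G` equals
`[G,G] ×_{⁅G,L⁆} [G,G] = {(a₁,a₂) ∈ [G,G] × [G,G] : a₁a₂⁻¹ ∈ ⁅G,L⁆}`. -/
theorem commutator_relProd {G : Type*} [Group G] (L : Subgroup G) [L.Normal] :
    ∀ p : G × G, p ∈ ⁅relProd L, relProd L⁆ ↔
      p.1 ∈ commutator G ∧ p.2 ∈ commutator G ∧ p.1 * p.2⁻¹ ∈ ⁅(⊤ : Subgroup G), L⁆ := by
  intro p
  rw [commutator_relProd_eq, mem_inf, mem_relProd, mem_prod]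
  tauto
end

section
/- Let (p_n)_{n≥1} be a sequence of positive real numbers that is either non-decreasing or non-increasing, and set P_N := Σ_{n=1}^N p_n. Assume P_N → ∞ and p_N / P_N → 0 as N → ∞. Then for every ε > 0 there exists δ > 0 with the following property: for every function f : ℕ → ℂ with |f(n)| ≤ 1 for all n, such that for every h ∈ ℕ (h ≥ 1) the limit A(h) := lim_{N→∞} (1/P_N) Σ_{n=1}^N p_n · f(n+h) · conj(f(n)) exists, one has the implication: if limsup_{H→∞} |(1/H) Σ_{h=1}^H A(h)| ≤ δ, then limsup_{N→∞} |(1/P_N) Σ_{n=1}^N p_n · f(n)| ≤ ε. (Theorem A.2 of the paper, a weighted van der Corput lemma.) -/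
/-!
Weighted averages with such weights are asymptotically shift invariant: by summation by parts,
shifting a bounded sequence by one changes `∑_{n ≤ N} p_n f(n)` by `O(p_1 + p_N) = o(P_N)`. Hence
`f` may be replaced by its window means `c(n) = H⁻¹ ∑_{h<H} f(n+h)`. By Jensen, the squared norm of
the average of `c` is at most the average of `‖c‖²`, which expands into a diagonal part `≤ 1/H`
and the correlations `f(n+h) conj f(n+h')`, whose averages tend to `A(h - h')`. Their total is a
sum of partial sums of `A`, small by the hypothesis on its Cesàro means; letting `H → ∞` gives
`limsup ‖avg f‖ ≤ 2 √δ`.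
-/

open Filter Topology Finset ComplexConjugate

namespace Finset

section CenterMass

variable {ι κ E F : Type*} [AddCommGroup E] [Module ℝ E] [AddCommGroup F] [Module ℝ F]
  (t : Finset ι) (w : ι → ℝ)

theorem centerMass_add (z z' : ι → E) :
    t.centerMass w (fun i => z i + z' i) = t.centerMass w z + t.centerMass w z' := by
  simp only [centerMass, smul_add, sum_add_distrib]

theorem centerMass_sum (s : Finset κ) (z : κ → ι → E) :
    t.centerMass w (fun i => ∑ j ∈ s, z j i) = ∑ j ∈ s, t.centerMass w (z j) := by
  simp only [centerMass, smul_sum]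
  exact sum_comm

theorem _root_.LinearMap.map_centerMass (L : E →ₗ[ℝ] F) (z : ι → E) :
    L (t.centerMass w z) = t.centerMass w (L ∘ z) := by
  simp [centerMass, map_sum, map_smul]

variable {t w}

theorem centerMass_mono (hw : ∀ i ∈ t, 0 ≤ w i) {u v : ι → ℝ} (huv : ∀ i ∈ t, u i ≤ v i) :
    t.centerMass w u ≤ t.centerMass w v := by
  unfold centerMass
  gcongr with i hi
  · exact inv_nonneg.2 (sum_nonneg hw)
  · exact hw i hi
  · exact huv i hi

theorem norm_centerMass_le {E : Type*} [SeminormedAddCommGroup E] [NormedSpace ℝ E]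
    (hw : ∀ i ∈ t, 0 ≤ w i) (hpos : 0 < ∑ i ∈ t, w i) {z : ι → E} {M : ℝ}
    (hz : ∀ i ∈ t, ‖z i‖ ≤ M) : ‖t.centerMass w z‖ ≤ M := by
  simpa using (convex_closedBall (0 : E) M).centerMass_mem hw hpos (by simpa using hz)

theorem sq_norm_centerMass_le {E : Type*} [SeminormedAddCommGroup E] [NormedSpace ℝ E]
    (hw : ∀ i ∈ t, 0 ≤ w i) (hpos : 0 < ∑ i ∈ t, w i) (z : ι → E) :
    ‖t.centerMass w z‖ ^ 2 ≤ t.centerMass w (fun i => ‖z i‖ ^ 2) :=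
  ((convexOn_norm convex_univ).pow (fun _ _ => norm_nonneg _) 2).map_centerMass_le hw hpos
    (fun _ _ => Set.mem_univ _)

theorem centerMass_complex_eq (t : Finset ι) (w : ι → ℝ) (z : ι → ℂ) :
    t.centerMass w z = 1 / ((∑ i ∈ t, w i : ℝ) : ℂ) * ∑ i ∈ t, (w i : ℂ) * z i := by
  simp [centerMass, Complex.real_smul]

end CenterMass
end Finset

theorem Complex.sq_norm_sum_range (z : ℕ → ℂ) (H : ℕ) :
    ‖∑ h ∈ range H, z h‖ ^ 2 =
      ∑ h ∈ range H, ‖z h‖ ^ 2 + 2 * (∑ h ∈ range H, ∑ h' ∈ range h, z h * conj (z h')).re := by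
  induction H with
  | zero => simp
  | succ H ih =>
    rw [sum_range_succ, add_comm, Complex.sq_norm, Complex.normSq_add, ← Complex.sq_norm,
      ← Complex.sq_norm, ih, map_sum, mul_sum]
    simp only [sum_range_succ, Complex.add_re, Complex.re_sum]
    ring

theorem norm_mul_conj_le_one {x y : ℂ} (hx : ‖x‖ ≤ 1) (hy : ‖y‖ ≤ 1) : ‖x * conj y‖ ≤ 1 := by
  rw [norm_mul, Complex.norm_conj]
  exact mul_le_one₀ hx (norm_nonneg _) hy

theorem sum_range_sub_eq_sum_Icc {M : Type*} [AddCommMonoid M] (A : ℕ → M) (h : ℕ) :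
    ∑ h' ∈ range h, A (h - h') = ∑ d ∈ Icc 1 h, A d := by
  refine sum_nbij' (h - ·) (h - ·) ?_ ?_ ?_ ?_ ?_ <;> intro x hx <;>
    simp only [mem_range, mem_Icc] at hx ⊢ <;> omega

theorem abs_sub_eq_abs_sub_add_abs_sub {p : ℕ → ℝ} (hp : Monotone p ∨ Antitone p) {a b c : ℕ}
    (hab : a ≤ b) (hbc : b ≤ c) : |p c - p a| = |p c - p b| + |p b - p a| := by
  rw [← sub_add_sub_cancel (p c) (p b) (p a), abs_add_eq_add_abs_iff]
  rcases hp with hp | hp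
  · exact Or.inl ⟨sub_nonneg.2 (hp hbc), sub_nonneg.2 (hp hab)⟩
  · exact Or.inr ⟨sub_nonpos.2 (hp hbc), sub_nonpos.2 (hp hab)⟩

section SummationByParts

variable {E : Type*} [SeminormedAddCommGroup E] [NormedSpace ℝ E] {p : ℕ → ℝ} {g : ℕ → E} {M : ℝ}

theorem norm_sum_smul_sub_sub_le (hp : Monotone p ∨ Antitone p) (hg : ∀ n, ‖g n‖ ≤ M) {N : ℕ}
    (hN : 1 ≤ N) :
    ‖∑ n ∈ Icc 1 N, p n • (g (n + 1) - g n) - (p N • g (N + 1) - p 1 • g 1)‖ ≤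
      M * |p N - p 1| := by
  induction N, hN using Nat.le_induction with
  | base => simp [smul_sub]
  | succ N hN ih =>
    rw [sum_Icc_succ_top (by omega)]
    calc _ = ‖(∑ n ∈ Icc 1 N, p n • (g (n + 1) - g n) - (p N • g (N + 1) - p 1 • g 1)) +
          (p N - p (N + 1)) • g (N + 1)‖ := by congr 1; module
      _ ≤ M * |p N - p 1| + |p N - p (N + 1)| * M := by
        refine norm_add_le_of_le ih ?_
        rw [norm_smul, Real.norm_eq_abs]
        exact mul_le_mul_of_nonneg_left (hg _) (abs_nonneg _)
      _ = M * |p (N + 1) - p 1| := by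
        rw [abs_sub_eq_abs_sub_add_abs_sub hp hN (by omega : N ≤ N + 1), abs_sub_comm (p (N + 1))]
        ring

theorem norm_sum_smul_sub_le (hp0 : ∀ n, 0 ≤ p n) (hp : Monotone p ∨ Antitone p)
    (hg : ∀ n, ‖g n‖ ≤ M) {N : ℕ} (hN : 1 ≤ N) :
    ‖∑ n ∈ Icc 1 N, p n • (g (n + 1) - g n)‖ ≤ 2 * M * (p 1 + p N) := by
  have hM : 0 ≤ M := (norm_nonneg _).trans (hg 0)
  have hsmul : ∀ n m, ‖p n • g m‖ ≤ p n * M := fun n m => by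
    rw [norm_smul, Real.norm_of_nonneg (hp0 n)]
    exact mul_le_mul_of_nonneg_left (hg m) (hp0 n)
  have hrem := norm_sum_smul_sub_sub_le hp hg hN
  have habs : |p N - p 1| ≤ p 1 + p N := abs_sub_le_iff.2 ⟨by linarith [hp0 1], by linarith [hp0 N]⟩
  have htri := norm_le_norm_add_norm_sub' (∑ n ∈ Icc 1 N, p n • (g (n + 1) - g n))
    (p N • g (N + 1) - p 1 • g 1)
  have hends := norm_sub_le (p N • g (N + 1)) (p 1 • g 1)
  nlinarith [hsmul N (N + 1), hsmul 1 1]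

end SummationByParts

section VanDerCorput

noncomputable def shiftAverage {E : Type*} [AddCommGroup E] [Module ℝ E] (f : ℕ → E) (H n : ℕ) :
    E :=
  (H : ℝ)⁻¹ • ∑ h ∈ range H, f (n + h)

variable {f : ℕ → ℂ}

theorem sq_norm_shiftAverage_le (hf : ∀ n, ‖f n‖ ≤ 1) (H n : ℕ) :
    ‖shiftAverage f H n‖ ^ 2 ≤
      1 / H + 2 / H ^ 2 * (∑ h ∈ range H, ∑ h' ∈ range h, f (n + h) * conj (f (n + h'))).re := by
  have hdiag : ∑ h ∈ range H, ‖f (n + h)‖ ^ 2 ≤ H := by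
    simpa using sum_le_card_nsmul (range H) _ 1 fun h _ => pow_le_one₀ (norm_nonneg _) (hf _)
  rw [shiftAverage, norm_smul, mul_pow, Complex.sq_norm_sum_range, norm_inv, Real.norm_natCast]
  rcases eq_or_ne H 0 with rfl | hH
  · simp
  calc _ ≤ (H : ℝ)⁻¹ ^ 2 * (H + 2 * (∑ h ∈ range H, ∑ h' ∈ range h,
        f (n + h) * conj (f (n + h'))).re) := by gcongr
    _ = _ := by field_simp

theorem sq_norm_centerMass_shiftAverage_le {t : Finset ℕ} {w : ℕ → ℝ} (hw : ∀ i ∈ t, 0 ≤ w i)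
    (hpos : 0 < ∑ i ∈ t, w i) (hf : ∀ n, ‖f n‖ ≤ 1) (H : ℕ) :
    ‖t.centerMass w (shiftAverage f H)‖ ^ 2 ≤ 1 / H + 2 / H ^ 2 *
      ‖∑ h ∈ range H, ∑ h' ∈ range h, t.centerMass w (fun n => f (n + h) * conj (f (n + h')))‖ := by
  set z : ℕ → ℂ := fun n => ∑ h ∈ range H, ∑ h' ∈ range h, f (n + h) * conj (f (n + h'))
  have hz : t.centerMass w z =
      ∑ h ∈ range H, ∑ h' ∈ range h, t.centerMass w (fun n => f (n + h) * conj (f (n + h'))) := by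
    simp only [z, centerMass_sum]
  calc _ ≤ t.centerMass w (fun n => ‖shiftAverage f H n‖ ^ 2) := sq_norm_centerMass_le hw hpos _
    _ ≤ t.centerMass w (fun n => 1 / H + (2 / H ^ 2 : ℝ) • (z n).re) :=
        centerMass_mono hw fun n _ => sq_norm_shiftAverage_le hf H n
    _ = 1 / H + 2 / H ^ 2 * (t.centerMass w z).re := by
        have hre : (t.centerMass w z).re = t.centerMass w (fun n => (z n).re) :=
          Complex.reLm.map_centerMass t w z
        rw [centerMass_add, centerMass_smul, hre, smul_eq_mul]
        exact congrArg (· + _) (centerMass_const hpos.ne' _)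
    _ ≤ _ := by
        rw [← hz]
        gcongr
        exact Complex.re_le_norm _

end VanDerCorput

theorem exists_norm_sum_range_le_of_limsup_le {S : ℕ → ℂ} (hS : ∀ k, ‖S k‖ ≤ k) {δ δ' : ℝ}
    (hlim : limsup (fun k : ℕ => ‖1 / (k : ℂ) * S k‖) atTop ≤ δ) (hδ : δ < δ') (hδ' : 0 ≤ δ') :
    ∃ K : ℝ, ∀ H : ℕ, ‖∑ h ∈ range H, S h‖ ≤ H * (K + δ' * H) := by
  have hbdd : IsBoundedUnder (· ≤ ·) atTop fun k : ℕ => ‖1 / (k : ℂ) * S k‖ := by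
    refine isBoundedUnder_of_eventually_le (a := 1) (Eventually.of_forall fun k => ?_)
    rcases eq_or_ne k 0 with rfl | hk
    · simp
    rw [norm_mul, norm_div, norm_one, Complex.norm_natCast, div_mul_eq_mul_div, one_mul,
      div_le_one (by positivity)]
    exact hS k
  obtain ⟨K, hK⟩ := eventually_atTop.1 (eventually_lt_of_limsup_lt (hlim.trans_lt hδ) hbdd)
  have hlarge : ∀ k, K ≤ k → ‖S k‖ ≤ δ' * k := fun k hk => by
    rcases eq_or_ne k 0 with rfl | hk0
    · simpa using hS 0
    have := hK k hk
    rw [norm_mul, norm_div, norm_one, Complex.norm_natCast, div_mul_eq_mul_div, one_mul,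
      div_lt_iff₀ (by positivity)] at this
    exact this.le
  refine ⟨K, fun H => ?_⟩
  calc ‖∑ h ∈ range H, S h‖ ≤ ∑ h ∈ range H, ((K : ℝ) + δ' * H) := by
        refine norm_sum_le_of_le _ fun h hh => ?_
        have hhH : (h : ℝ) ≤ H := by exact_mod_cast (mem_range.1 hh).le
        rcases le_or_gt K h with hKh | hhK
        · nlinarith [hlarge h hKh, Nat.cast_nonneg (α := ℝ) K]
        · have : (h : ℝ) ≤ K := by exact_mod_cast hhK.le
          nlinarith [hS h, Nat.cast_nonneg (α := ℝ) H]
    _ = H * (K + δ' * H) := by rw [sum_const, card_range, nsmul_eq_mul]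

structure IsAdmissibleWeight (p : ℕ → ℝ) : Prop where
  nonneg : ∀ n, 0 ≤ p n
  monotone_or_antitone : Monotone p ∨ Antitone p
  tendsto_sum : Tendsto (fun N => ∑ n ∈ Icc 1 N, p n) atTop atTop
  tendsto_div_sum : Tendsto (fun N => p N / ∑ n ∈ Icc 1 N, p n) atTop (𝓝 0)

namespace IsAdmissibleWeight

variable {p : ℕ → ℝ} {E : Type*} [SeminormedAddCommGroup E] [NormedSpace ℝ E] {g : ℕ → E} {M : ℝ}

theorem eventually_sum_pos (hp : IsAdmissibleWeight p) : ∀ᶠ N in atTop, 0 < ∑ n ∈ Icc 1 N, p n :=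
  hp.tendsto_sum.eventually_gt_atTop 0

theorem tendsto_centerMass_comp_add_one_sub (hp : IsAdmissibleWeight p) (hg : ∀ n, ‖g n‖ ≤ M) :
    Tendsto (fun N => (Icc 1 N).centerMass p (fun n => g (n + 1)) - (Icc 1 N).centerMass p g)
      atTop (𝓝 0) := by
  have hbound : Tendsto (fun N => 2 * M * (p 1 / ∑ n ∈ Icc 1 N, p n + p N / ∑ n ∈ Icc 1 N, p n))
      atTop (𝓝 0) := by
    simpa using ((tendsto_const_nhds.div_atTop hp.tendsto_sum).add hp.tendsto_div_sum).const_mul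
      (2 * M)
  refine squeeze_zero_norm' ?_ hbound
  filter_upwards [eventually_ge_atTop 1] with N hN
  have hdiff : (Icc 1 N).centerMass p (fun n => g (n + 1)) - (Icc 1 N).centerMass p g =
      (∑ n ∈ Icc 1 N, p n)⁻¹ • ∑ n ∈ Icc 1 N, p n • (g (n + 1) - g n) := by
    simp only [centerMass, smul_sub, sum_sub_distrib]
  rw [hdiff, norm_smul, Real.norm_of_nonneg (inv_nonneg.2 (sum_nonneg fun n _ => hp.nonneg n))]
  calc _ ≤ (∑ n ∈ Icc 1 N, p n)⁻¹ * (2 * M * (p 1 + p N)) := by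
        gcongr
        · exact inv_nonneg.2 (sum_nonneg fun n _ => hp.nonneg n)
        · exact norm_sum_smul_sub_le hp.nonneg hp.monotone_or_antitone hg hN
    _ = _ := by ring

theorem tendsto_centerMass_comp_add_sub (hp : IsAdmissibleWeight p) (hg : ∀ n, ‖g n‖ ≤ M) (h : ℕ) :
    Tendsto (fun N => (Icc 1 N).centerMass p (fun n => g (n + h)) - (Icc 1 N).centerMass p g)
      atTop (𝓝 0) := by
  induction h generalizing g with
  | zero => simpa using tendsto_const_nhds
  | succ h ih =>
    have := (ih (g := fun n => g (n + 1)) fun n => hg _).add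
      (hp.tendsto_centerMass_comp_add_one_sub hg)
    simpa [add_assoc, add_comm 1 h] using this

theorem tendsto_centerMass_comp_add (hp : IsAdmissibleWeight p) (hg : ∀ n, ‖g n‖ ≤ M) (h : ℕ)
    {L : E} (hL : Tendsto (fun N => (Icc 1 N).centerMass p g) atTop (𝓝 L)) :
    Tendsto (fun N => (Icc 1 N).centerMass p (fun n => g (n + h))) atTop (𝓝 L) := by
  simpa using (hp.tendsto_centerMass_comp_add_sub hg h).add hL

theorem norm_le_of_tendsto_centerMass (hp : IsAdmissibleWeight p) (hg : ∀ n, ‖g n‖ ≤ M) {L : E}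
    (hL : Tendsto (fun N => (Icc 1 N).centerMass p g) atTop (𝓝 L)) : ‖L‖ ≤ M :=
  le_of_tendsto hL.norm <| hp.eventually_sum_pos.mono fun _ hP =>
    norm_centerMass_le (fun n _ => hp.nonneg n) hP fun n _ => hg n

theorem tendsto_centerMass_shiftAverage_sub (hp : IsAdmissibleWeight p) (hg : ∀ n, ‖g n‖ ≤ M)
    {H : ℕ} (hH : H ≠ 0) :
    Tendsto (fun N => (Icc 1 N).centerMass p (shiftAverage g H) - (Icc 1 N).centerMass p g)
      atTop (𝓝 0) := by
  have hsplit : ∀ N, (Icc 1 N).centerMass p (shiftAverage g H) - (Icc 1 N).centerMass p g =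
      (H : ℝ)⁻¹ • ∑ h ∈ range H,
        ((Icc 1 N).centerMass p (fun n => g (n + h)) - (Icc 1 N).centerMass p g) := fun N => by
    unfold shiftAverage
    simp only [centerMass_smul, centerMass_sum, sum_sub_distrib, sum_const, card_range, smul_sub,
      ← Nat.cast_smul_eq_nsmul ℝ, smul_smul, inv_mul_cancel₀ (Nat.cast_ne_zero.2 hH : (H : ℝ) ≠ 0),
      one_smul]
  simpa [hsplit] using (tendsto_finsetSum (range H) fun h _ =>
    hp.tendsto_centerMass_comp_add_sub hg h).const_smul (H : ℝ)⁻¹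

variable {f : ℕ → ℂ} {A : ℕ → ℂ}

theorem tendsto_sum_sum_centerMass_mul_conj (hp : IsAdmissibleWeight p) (hf : ∀ n, ‖f n‖ ≤ 1)
    (hA : ∀ d, 1 ≤ d → Tendsto (fun N => (Icc 1 N).centerMass p (fun n => f (n + d) * conj (f n)))
      atTop (𝓝 (A d))) (H : ℕ) :
    Tendsto (fun N => ∑ h ∈ range H, ∑ h' ∈ range h,
        (Icc 1 N).centerMass p (fun n => f (n + h) * conj (f (n + h'))))
      atTop (𝓝 (∑ h ∈ range H, ∑ d ∈ Icc 1 h, A d)) := by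
  refine tendsto_finsetSum _ fun h _ => ?_
  rw [← sum_range_sub_eq_sum_Icc]
  refine tendsto_finsetSum _ fun h' hh' => ?_
  have hlt := mem_range.1 hh'
  have := hp.tendsto_centerMass_comp_add (fun m => norm_mul_conj_le_one (hf _) (hf m)) h'
    (hA (h - h') (by omega))
  have hshift : ∀ n, n + h' + (h - h') = n + h := fun n => by omega
  simpa only [hshift] using this

theorem eventually_sq_norm_centerMass_le (hp : IsAdmissibleWeight p) (hf : ∀ n, ‖f n‖ ≤ 1)
    (hA : ∀ d, 1 ≤ d → Tendsto (fun N => (Icc 1 N).centerMass p (fun n => f (n + d) * conj (f n)))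
      atTop (𝓝 (A d))) {H : ℕ} (hH : H ≠ 0) {η : ℝ} (hη : 0 < η) :
    ∀ᶠ N in atTop, ‖(Icc 1 N).centerMass p f‖ ^ 2 ≤
      1 / H + 2 / H ^ 2 * ‖∑ h ∈ range H, ∑ d ∈ Icc 1 h, A d‖ + η := by
  set L := ∑ h ∈ range H, ∑ d ∈ Icc 1 h, A d
  have hcoef : 2 / (H : ℝ) ^ 2 ≤ 2 :=
    div_le_self zero_le_two (one_le_pow₀ (by exact_mod_cast Nat.one_le_iff_ne_zero.2 hH))
  have hc := (hp.tendsto_centerMass_shiftAverage_sub hf hH).norm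
  have hB := ((hp.tendsto_sum_sum_centerMass_mul_conj hf hA H).sub_const L).norm
  rw [norm_zero] at hc
  rw [sub_self, norm_zero] at hB
  filter_upwards [hp.eventually_sum_pos, hc.eventually (gt_mem_nhds (by positivity : 0 < η / 4)),
    hB.eventually (gt_mem_nhds (by positivity : 0 < η / 4))] with N hP hcN hBN
  set a := (Icc 1 N).centerMass p f
  set b := (Icc 1 N).centerMass p (shiftAverage f H)
  set B := ∑ h ∈ range H, ∑ h' ∈ range h,
    (Icc 1 N).centerMass p (fun n => f (n + h) * conj (f (n + h')))
  have hvdc : ‖b‖ ^ 2 ≤ 1 / H + 2 / H ^ 2 * ‖B‖ :=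
    sq_norm_centerMass_shiftAverage_le (fun n _ => hp.nonneg n) hP hf H
  have ha : ‖a‖ ≤ 1 := norm_centerMass_le (fun n _ => hp.nonneg n) hP fun n _ => hf n
  have hab : ‖a‖ ^ 2 ≤ ‖b‖ ^ 2 + 2 * ‖b - a‖ := by
    have := norm_le_norm_add_norm_sub' a b
    rw [norm_sub_rev] at this
    nlinarith [mul_le_mul_of_nonneg_left this (norm_nonneg a),
      mul_le_of_le_one_left (norm_nonneg (b - a)) ha, sq_nonneg (‖a‖ - ‖b‖)]
  have hBL : ‖B‖ ≤ ‖L‖ + η / 4 := by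
    have := norm_le_norm_add_norm_sub' B L
    linarith
  calc ‖a‖ ^ 2 ≤ 1 / H + 2 / H ^ 2 * (‖L‖ + η / 4) + 2 * (η / 4) := by
        have : 2 / (H : ℝ) ^ 2 * ‖B‖ ≤ 2 / H ^ 2 * (‖L‖ + η / 4) := by gcongr
        linarith
    _ ≤ _ := by nlinarith

theorem eventually_norm_centerMass_le (hp : IsAdmissibleWeight p) (hf : ∀ n, ‖f n‖ ≤ 1)
    (hA : ∀ d, 1 ≤ d → Tendsto (fun N => (Icc 1 N).centerMass p (fun n => f (n + d) * conj (f n)))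
      atTop (𝓝 (A d))) {K δ ε : ℝ}
    (hK : ∀ H : ℕ, ‖∑ h ∈ range H, ∑ d ∈ Icc 1 h, A d‖ ≤ H * (K + δ * H)) (hε : 0 < ε)
    (hδ : δ ≤ ε ^ 2 / 4) :
    ∀ᶠ N in atTop, ‖(Icc 1 N).centerMass p f‖ ≤ ε := by
  obtain ⟨H, hH⟩ := exists_nat_ge (max 1 (4 * (1 + 2 * K) / ε ^ 2))
  have hH1 : (1 : ℝ) ≤ H := (le_max_left _ _).trans hH
  have hH0 : H ≠ 0 := by rintro rfl; norm_num at hH1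
  have hsmall : (1 + 2 * K) / H ≤ ε ^ 2 / 4 := by
    have := (le_max_right _ _).trans hH
    rw [div_le_iff₀ (by positivity)] at this
    rw [div_le_iff₀ (by positivity)]
    linarith
  have hcross : 2 / (H : ℝ) ^ 2 * (H * (K + δ * H)) = 2 * K / H + 2 * δ := by
    field_simp
  filter_upwards [hp.eventually_sq_norm_centerMass_le hf hA hH0 (η := ε ^ 2 / 4) (by positivity)]
    with N hN
  refine (pow_le_pow_iff_left₀ (norm_nonneg _) hε.le two_ne_zero).1 ?_
  have : 2 / (H : ℝ) ^ 2 * ‖∑ h ∈ range H, ∑ d ∈ Icc 1 h, A d‖ ≤ 2 * K / H + 2 * δ := by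
    rw [← hcross]
    gcongr
    exact hK H
  have : 1 / (H : ℝ) + 2 * K / H = (1 + 2 * K) / H := by ring
  linarith

end IsAdmissibleWeight

/-- **Theorem A.2** (a weighted van der Corput lemma). -/
theorem weighted_vdC (p : ℕ → ℝ) (hp : ∀ n, 0 < p n)
    (hmono : Monotone p ∨ Antitone p)
    (hPtop : Tendsto (fun N => ∑ n ∈ Finset.Icc 1 N, p n) atTop atTop)
    (hratio : Tendsto (fun N => p N / ∑ n ∈ Finset.Icc 1 N, p n) atTop (nhds 0)) :
    ∀ ε > (0 : ℝ), ∃ δ > (0 : ℝ), ∀ f : ℕ → ℂ, (∀ n, ‖f n‖ ≤ 1) →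
      ∀ A : ℕ → ℂ,
        (∀ h : ℕ, 1 ≤ h →
          Tendsto (fun N => (1 / ((∑ n ∈ Finset.Icc 1 N, p n : ℝ) : ℂ)) *
            ∑ n ∈ Finset.Icc 1 N, (p n : ℂ) * f (n + h) * (starRingEnd ℂ) (f n))
            atTop (nhds (A h))) →
        (limsup (fun H : ℕ =>
            ‖(1 / (H : ℂ)) * ∑ h ∈ Finset.Icc 1 H, A h‖) atTop ≤ δ →
          limsup (fun N : ℕ =>
            ‖(1 / ((∑ n ∈ Finset.Icc 1 N, p n : ℝ) : ℂ)) *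
              ∑ n ∈ Finset.Icc 1 N, (p n : ℂ) * f n‖) atTop ≤ ε) := by
  have hw : IsAdmissibleWeight p := ⟨fun n => (hp n).le, hmono, hPtop, hratio⟩
  intro ε hε
  refine ⟨ε ^ 2 / 8, by positivity, fun f hf A hA hlim => ?_⟩
  have hA' : ∀ d, 1 ≤ d → Tendsto
      (fun N => (Icc 1 N).centerMass p (fun n => f (n + d) * conj (f n))) atTop (𝓝 (A d)) := by
    simpa only [centerMass_complex_eq, mul_assoc] using hA
  have hS : ∀ k : ℕ, ‖∑ d ∈ Icc 1 k, A d‖ ≤ k := fun k => by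
    simpa using norm_sum_le_of_le (Icc 1 k) fun d hd => hw.norm_le_of_tendsto_centerMass
      (fun n => norm_mul_conj_le_one (hf _) (hf n)) (hA' d (mem_Icc.1 hd).1)
  obtain ⟨K, hK⟩ := exists_norm_sum_range_le_of_limsup_le hS hlim
    (by linarith [sq_pos_of_pos hε] : ε ^ 2 / 8 < ε ^ 2 / 4) (by positivity)
  simp only [← centerMass_complex_eq]
  exact limsup_le_of_le (isCoboundedUnder_le_of_le atTop fun _ => norm_nonneg _)
    (hw.eventually_norm_centerMass_le hf hA' hK hε le_rfl)
end

section
/- Let ℋ be a Hardy field and let f : ℝ → ℝ be a function whose germ at +∞ belongs to ℋ and which has polynomial growth. If f(n) ∈ ℤ for every sufficiently large natural number n, then f eventually agrees with a real polynomial: there exists p ∈ ℝ[X] such that f(t) = p(t) for all sufficiently large t (i.e., the germ of f at +∞ equals the germ of the polynomial function p). (Lemma A.1 of the paper.) -/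
open Filter Topology

/-- The ring of germs at `+∞` of functions `ℝ → ℝ`. -/
abbrev RGerm : Type := Filter.Germ (Filter.atTop : Filter ℝ) ℝ

/-- A **Hardy field** is a subring of the ring of germs at `+∞` of functions `ℝ → ℝ` which is a
field (every nonzero germ has a multiplicative inverse in it) and is closed under
differentiation (every germ has a representative which is eventually differentiable and whose
derivative again has germ in the subring). -/
def IsHardyField (H : Subring RGerm) : Prop :=
  (∀ g ∈ H, g ≠ 0 → ∃ h ∈ H, g * h = 1) ∧
  (∀ g ∈ H, ∃ f : ℝ → ℝ, (f : RGerm) = g ∧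
    (∀ᶠ t in atTop, DifferentiableAt ℝ f t) ∧ ((deriv f : ℝ → ℝ) : RGerm) ∈ H)

/-- `f ≺ g` : `f(t)/g(t) → 0` as `t → ∞`. -/
def GrowsSlower (f g : ℝ → ℝ) : Prop := Tendsto (fun t => f t / g t) atTop (nhds 0)

/-- `f ≪ g` : there are `C > 0` and `t₀` with `|f(t)| ≤ C·g(t)` for all `t ≥ t₀`. -/
def BigO (f g : ℝ → ℝ) : Prop := ∃ C > (0 : ℝ), ∀ᶠ t in atTop, |f t| ≤ C * g t

/-- `f` has polynomial growth: `|f(t)| ≪ t^d` for some `d ∈ ℕ`. -/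
def PolyGrowth (f : ℝ → ℝ) : Prop := ∃ d : ℕ, BigO f (fun t => t ^ d)

/-!
All derivatives `f⁽ᵏ⁾` lie in the Hardy field. An element of a Hardy field is eventually zero
or eventually nonzero, so every `f⁽ᵏ⁾` is eventually monotone, and then Landau's inequality
`|g'(t)| · t/2 ≤ |g(t/2)| + 2|g(t)| + |g(3t/2)|` (for `g'` monotone) turns `f = O(t^d)` into
`f⁽ᵏ⁾ = O(t^(d-k))`; in particular `f⁽ᵈ⁺¹⁾ → 0`. By the mean value theorem the integer
`Δ^(d+1) f(n)` equals `f⁽ᵈ⁺¹⁾(ξ)` for some `ξ ≥ n`, so it vanishes for large `n` and `f⁽ᵈ⁺¹⁾`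
has arbitrarily large zeros. Lying in a Hardy field, `f⁽ᵈ⁺¹⁾` is then eventually zero, and `f`
is eventually a polynomial.
-/

open Asymptotics Polynomial Set
open scoped fwdDiff

theorem Polynomial.exists_derivative_eq {K : Type*} [Field K] [CharZero K] (p : K[X]) :
    ∃ q : K[X], derivative q = p := by
  induction p using Polynomial.induction_on' with
  | add p q hp hq =>
    obtain ⟨P, rfl⟩ := hp
    obtain ⟨Q, rfl⟩ := hq
    exact ⟨P + Q, derivative_add⟩
  | monomial n a =>
    refine ⟨monomial (n + 1) (a / (n + 1)), ?_⟩
    rw [derivative_monomial, Nat.add_sub_cancel]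
    congr 1
    push_cast
    field_simp

theorem exists_eventuallyEq_const_of_hasDerivAt_zero {E : Type*} [NormedAddCommGroup E]
    [NormedSpace ℝ E] {u : ℝ → E}
    (h : ∀ᶠ t in atTop, HasDerivAt u 0 t) : ∃ c, u =ᶠ[atTop] fun _ => c := by
  obtain ⟨a, ha⟩ := eventually_atTop.1 h
  refine ⟨u a, eventually_atTop.2 ⟨a, fun t ht => ?_⟩⟩
  exact constant_of_has_deriv_right_zero (fun x hx => (ha x hx.1).continuousAt.continuousWithinAt)
    (fun x hx => (ha x hx.1).hasDerivWithinAt) t ⟨ht, le_rfl⟩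

theorem monotoneOn_or_antitoneOn_Ici_of_hasDerivAt {v v' : ℝ → ℝ} {c : ℝ}
    (hd : ∀ t ≥ c, HasDerivAt v (v' t) t) (hsign : (∀ t ≥ c, 0 ≤ v' t) ∨ ∀ t ≥ c, v' t ≤ 0) :
    MonotoneOn v (Ici c) ∨ AntitoneOn v (Ici c) := by
  have hcont : ContinuousOn v (Ici c) := fun x hx => (hd x hx).continuousAt.continuousWithinAt
  have hderiv : ∀ x ∈ interior (Ici c), HasDerivWithinAt v (v' x) (interior (Ici c)) x :=
    fun x hx => (hd x (interior_subset hx)).hasDerivWithinAt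
  exact hsign.imp
    (fun h => monotoneOn_of_hasDerivWithinAt_nonneg (convex_Ici c) hcont hderiv
      fun x hx => h x (interior_subset hx))
    (fun h => antitoneOn_of_hasDerivWithinAt_nonpos (convex_Ici c) hcont hderiv
      fun x hx => h x (interior_subset hx))

theorem abs_deriv_mul_le_of_monotoneOn_or_antitoneOn {g g' : ℝ → ℝ} {t h : ℝ} (hh : 0 < h)
    (hd : ∀ x ∈ Icc (t - h) (t + h), HasDerivAt g (g' x) x)
    (hm : MonotoneOn g' (Icc (t - h) (t + h)) ∨ AntitoneOn g' (Icc (t - h) (t + h))) :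
    |g' t| * h ≤ |g (t - h)| + 2 * |g t| + |g (t + h)| := by
  have mvt : ∀ a b, t - h ≤ a → a < b → b ≤ t + h →
      ∃ ξ ∈ Ioo a b, |g' ξ| * (b - a) = |g b - g a| := by
    intro a b ha hab hb
    obtain ⟨ξ, hξ, hslope⟩ := exists_hasDerivAt_eq_slope g g' hab
      (fun x hx => (hd x ⟨ha.trans hx.1, hx.2.trans hb⟩).continuousAt.continuousWithinAt)
      (fun x hx => hd x ⟨ha.trans hx.1.le, hx.2.le.trans hb⟩)
    refine ⟨ξ, hξ, ?_⟩
    rw [hslope, abs_div, abs_of_pos (sub_pos.2 hab), div_mul_cancel₀ _ (sub_pos.2 hab).ne']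
  obtain ⟨ξ₁, hξ₁, h₁⟩ := mvt (t - h) t le_rfl (by linarith) (by linarith)
  obtain ⟨ξ₂, hξ₂, h₂⟩ := mvt t (t + h) (by linarith) (by linarith) le_rfl
  have hmem₁ : ξ₁ ∈ Icc (t - h) (t + h) := ⟨hξ₁.1.le, by linarith [hξ₁.2]⟩
  have hmem₂ : ξ₂ ∈ Icc (t - h) (t + h) := ⟨by linarith [hξ₂.1], hξ₂.2.le⟩
  have hmem : t ∈ Icc (t - h) (t + h) := ⟨by linarith, by linarith⟩
  have hbetween : |g' t| ≤ max |g' ξ₁| |g' ξ₂| := by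
    rcases hm with hm | hm
    · exact abs_le_max_abs_abs (hm hmem₁ hmem hξ₁.2.le) (hm hmem hmem₂ hξ₂.1.le)
    · rw [max_comm]
      exact abs_le_max_abs_abs (hm hmem hmem₂ hξ₂.1.le) (hm hmem₁ hmem hξ₁.2.le)
  rw [sub_sub_cancel] at h₁
  rw [add_sub_cancel_left] at h₂
  calc |g' t| * h ≤ (|g' ξ₁| + |g' ξ₂|) * h := by
        gcongr
        exact hbetween.trans (max_le_add_of_nonneg (abs_nonneg _) (abs_nonneg _))
    _ = |g t - g (t - h)| + |g (t + h) - g t| := by rw [add_mul, h₁, h₂]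
    _ ≤ |g (t - h)| + 2 * |g t| + |g (t + h)| := by
        linarith [abs_sub (g t) (g (t - h)), abs_sub (g (t + h)) (g t)]

theorem isBigO_zpow_sub_one_of_hasDerivAt {g g' : ℝ → ℝ} {k : ℤ}
    (hd : ∀ᶠ t in atTop, HasDerivAt g (g' t) t)
    (hm : ∃ c, MonotoneOn g' (Ici c) ∨ AntitoneOn g' (Ici c))
    (hg : g =O[atTop] fun t => t ^ k) : g' =O[atTop] fun t => t ^ (k - 1) := by
  have hscale : ∀ a : ℝ, 0 < a → (fun t => g (a * t)) =O[atTop] fun t => t ^ k := fun a ha =>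
    (hg.comp_tendsto (tendsto_id.const_mul_atTop ha)).trans <|
      (isBigO_const_mul_self (a ^ k) _ atTop).congr_left fun t => (mul_zpow a t k).symm
  obtain ⟨c, hc⟩ := hm
  obtain ⟨a, ha⟩ := eventually_atTop.1 hd
  have hlandau : ∀ᶠ t in atTop,
      ‖g' t * t‖ ≤ 2 * ‖|g (2⁻¹ * t)| + 2 * |g t| + |g (3 / 2 * t)|‖ := by
    filter_upwards [eventually_ge_atTop (2 * max a c), eventually_gt_atTop 0] with t ht ht0
    have hac := le_max_left a c
    have hcc := le_max_right a c
    have hsub : ∀ x ∈ Icc (t - t / 2) (t + t / 2), max a c ≤ x := fun x hx => by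
      linarith [hx.1]
    have := abs_deriv_mul_le_of_monotoneOn_or_antitoneOn (half_pos ht0)
      (fun x hx => ha x (hac.trans (hsub x hx)))
      (hc.imp (·.mono fun x hx => hcc.trans (hsub x hx))
        (·.mono fun x hx => hcc.trans (hsub x hx)))
    rw [show t - t / 2 = 2⁻¹ * t by ring, show t + t / 2 = 3 / 2 * t by ring] at this
    have hnn : 0 ≤ |g (2⁻¹ * t)| + 2 * |g t| + |g (3 / 2 * t)| := by positivity
    rw [Real.norm_eq_abs, Real.norm_eq_abs, abs_mul, abs_of_pos ht0, abs_of_nonneg hnn]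
    linarith
  have hmul : (fun t => g' t * t) =O[atTop] fun t => t ^ k :=
    (IsBigO.of_bound 2 hlandau).trans
      ((((hscale _ (by norm_num)).abs_left.add (hg.abs_left.const_mul_left 2)).add
        (hscale _ (by norm_num)).abs_left))
  refine (hmul.mul (isBigO_refl (fun t : ℝ => t⁻¹) atTop)).congr' ?_ ?_ <;>
    filter_upwards [eventually_ne_atTop 0] with t ht
  · field_simp
  · rw [zpow_sub_one₀ ht]

theorem eventually_exists_int_fwdDiff_iter {f : ℝ → ℝ}
    (hf : ∀ᶠ n : ℕ in atTop, ∃ z : ℤ, f n = z) (k : ℕ) :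
    ∀ᶠ n : ℕ in atTop, ∃ z : ℤ, (Δ_[1])^[k] f n = z := by
  induction k with
  | zero => simpa using hf
  | succ k ih =>
    filter_upwards [ih, (tendsto_add_atTop_nat 1).eventually ih] with n ⟨a, ha⟩ ⟨b, hb⟩
    refine ⟨b - a, ?_⟩
    rw [Nat.cast_add, Nat.cast_one] at hb
    rw [Function.iterate_succ_apply', fwdDiff, ha, hb, Int.cast_sub]

theorem exists_fwdDiff_iter_eq_of_hasDerivAt {F : ℕ → ℝ → ℝ} {x : ℝ} (k : ℕ)
    (hF : ∀ j < k, ∀ t ≥ x, HasDerivAt (F j) (F (j + 1) t) t) :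
    ∃ ξ ∈ Icc x (x + k), (Δ_[1])^[k] (F 0) x = F k ξ := by
  induction k generalizing F with
  | zero => exact ⟨x, by simp, rfl⟩
  | succ k ih =>
    obtain ⟨ξ, hξ, hξeq⟩ := ih (F := fun j => Δ_[1] (F j)) fun j hj t ht =>
      ((hF j (by omega) (t + 1) (by linarith)).comp_add_const t 1).sub (hF j (by omega) t ht)
    obtain ⟨η, hη, hηeq⟩ := exists_hasDerivAt_eq_slope (F k) (F (k + 1)) (lt_add_one ξ)
      (fun y hy => (hF k (by omega) y (hξ.1.trans hy.1)).continuousAt.continuousWithinAt)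
      (fun y hy => hF k (by omega) y (hξ.1.trans hy.1.le))
    refine ⟨η, ⟨hξ.1.trans hη.1.le, ?_⟩, ?_⟩
    · push_cast
      linarith [hξ.2, hη.2]
    · rw [Function.iterate_succ_apply, hξeq, hηeq, add_sub_cancel_left, div_one]
      rfl

def IsDerivChain (g : ℕ → ℝ → ℝ) : Prop :=
  ∀ k, ∀ᶠ t in atTop, HasDerivAt (g k) (g (k + 1) t) t

namespace IsDerivChain

variable {g : ℕ → ℝ → ℝ}

theorem exists_polynomial_of_eventuallyEq_zero (hg : IsDerivChain g) {m : ℕ}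
    (hm : g m =ᶠ[atTop] 0) : ∃ p : ℝ[X], ∀ᶠ t in atTop, g 0 t = p.eval t := by
  induction m generalizing g with
  | zero => exact ⟨0, hm.mono fun t ht => by simpa using ht⟩
  | succ m ih =>
    obtain ⟨p, hp⟩ := ih (g := fun k => g (k + 1)) (fun k => hg (k + 1)) hm
    obtain ⟨P, hP⟩ := p.exists_derivative_eq
    obtain ⟨c, hc⟩ := exists_eventuallyEq_const_of_hasDerivAt_zero
      (u := fun t => g 0 t - P.eval t) <| by
        filter_upwards [hg 0, hp] with t ht hpt
        have := ht.sub (P.hasDerivAt t)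
        rwa [hpt, hP, sub_self] at this
    refine ⟨P + C c, ?_⟩
    filter_upwards [hc] with t ht
    simp only [eval_add, eval_C, ← ht]
    ring

theorem isBigO_zpow_sub (hg : IsDerivChain g)
    (hm : ∀ j, ∃ c, MonotoneOn (g j) (Ici c) ∨ AntitoneOn (g j) (Ici c)) {k : ℤ}
    (h0 : g 0 =O[atTop] fun t => t ^ k) (j : ℕ) : g j =O[atTop] fun t => t ^ (k - j) := by
  induction j with
  | zero => simpa using h0
  | succ j ih =>
    simpa [sub_add_eq_sub_sub] using isBigO_zpow_sub_one_of_hasDerivAt (hg j) (hm (j + 1)) ih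

theorem frequently_eq_zero (hg : IsDerivChain g) {m : ℕ}
    (hint : ∀ᶠ n : ℕ in atTop, ∃ z : ℤ, g 0 n = z) (hsmall : Tendsto (g m) atTop (𝓝 0)) :
    ∃ᶠ t in atTop, g m t = 0 := by
  obtain ⟨a, ha⟩ := eventually_atTop.1 <| (Set.finite_Iio m).eventually_all.2 fun j _ => hg j
  obtain ⟨b, hb⟩ := eventually_atTop.1 <| Metric.tendsto_nhds.1 hsmall 1 one_pos
  have hzeros : ∀ᶠ n : ℕ in atTop, ∃ ξ ≥ (n : ℝ), g m ξ = 0 := by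
    filter_upwards [eventually_exists_int_fwdDiff_iter hint m,
      tendsto_natCast_atTop_atTop.eventually_ge_atTop a,
      tendsto_natCast_atTop_atTop.eventually_ge_atTop b] with n ⟨z, hz⟩ hna hnb
    obtain ⟨ξ, hξ, hξeq⟩ :=
      exists_fwdDiff_iter_eq_of_hasDerivAt m fun j hj t ht => ha t (hna.trans ht) j hj
    have hz1 : |(z : ℝ)| < 1 := by
      rw [← hz, hξeq, ← sub_zero (g m ξ), ← Real.dist_eq]
      exact hb ξ (hnb.trans hξ.1)
    refine ⟨ξ, hξ.1, ?_⟩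
    rw [← hξeq, hz, Int.cast_eq_zero, ← Int.abs_lt_one_iff]
    exact_mod_cast hz1
  refine frequently_atTop.2 fun c => ?_
  obtain ⟨n, ⟨ξ, hξ, h0⟩, hn⟩ :=
    (hzeros.and (tendsto_natCast_atTop_atTop.eventually_ge_atTop c)).exists
  exact ⟨ξ, hn.trans hξ, h0⟩

end IsDerivChain

namespace IsHardyField

variable {H : Subring RGerm}

theorem eventuallyEq_zero_or_eventually_ne_zero (hH : IsHardyField H) {u : ℝ → ℝ}
    (hu : (u : RGerm) ∈ H) : u =ᶠ[atTop] 0 ∨ ∀ᶠ t in atTop, u t ≠ 0 := by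
  by_cases h0 : (u : RGerm) = 0
  · exact Or.inl (Germ.coe_eq.1 h0)
  · obtain ⟨v, -, huv⟩ := hH.1 _ hu h0
    induction v using Germ.inductionOn with | h v => ?_
    have : (fun t => u t * v t) =ᶠ[atTop] fun _ => 1 := Germ.coe_eq.1 huv
    exact Or.inr (this.mono fun t ht => left_ne_zero_of_mul_eq_one ht)

theorem exists_isDerivChain (hH : IsHardyField H) {u : ℝ → ℝ} (hu : (u : RGerm) ∈ H) :
    ∃ g : ℕ → ℝ → ℝ, IsDerivChain g ∧ u =ᶠ[atTop] g 0 ∧ ∀ k, (g k : RGerm) ∈ H := by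
  choose rep hrep hdiff hderiv using hH.2
  let G : ℕ → H := fun k => Nat.rec ⟨u, hu⟩ (fun _ w => ⟨deriv (rep w w.2), hderiv w w.2⟩) k
  let g : ℕ → ℝ → ℝ := fun k => rep (G k).1 (G k).2
  refine ⟨g, fun k => ?_, Germ.coe_eq.1 (hrep (G 0).1 (G 0).2).symm,
    fun k => (hrep (G k).1 (G k).2).symm ▸ (G k).2⟩
  have hnext : deriv (g k) =ᶠ[atTop] g (k + 1) := Germ.coe_eq.1 (hrep (G (k + 1)).1 _).symm
  filter_upwards [hdiff _ (G k).2, hnext] with t ht hnt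
  exact hnt ▸ ht.hasDerivAt

theorem exists_monotoneOn_or_antitoneOn (hH : IsHardyField H) {v v' : ℝ → ℝ}
    (hd : ∀ᶠ t in atTop, HasDerivAt v (v' t) t) (hv' : (v' : RGerm) ∈ H) :
    ∃ c, MonotoneOn v (Ici c) ∨ AntitoneOn v (Ici c) := by
  rcases hH.eventuallyEq_zero_or_eventually_ne_zero hv' with h | h
  · obtain ⟨c, hc⟩ := eventually_atTop.1 (hd.and h)
    exact ⟨c, monotoneOn_or_antitoneOn_Ici_of_hasDerivAt (fun t ht => (hc t ht).1)
      (Or.inl fun t ht => (hc t ht).2.ge)⟩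
  · obtain ⟨c, hc⟩ := eventually_atTop.1 (hd.and h)
    refine ⟨c, monotoneOn_or_antitoneOn_Ici_of_hasDerivAt (fun t ht => (hc t ht).1) ?_⟩
    rcases hasDerivWithinAt_forall_lt_or_forall_gt_of_forall_ne (convex_Ici c)
      (fun x hx => (hc x hx).1.hasDerivWithinAt) (fun x hx => (hc x hx).2) with h | h
    exacts [Or.inr fun t ht => (h t ht).le, Or.inl fun t ht => (h t ht).le]

end IsHardyField

theorem PolyGrowth.exists_isBigO_zpow {f : ℝ → ℝ} (h : PolyGrowth f) :
    ∃ d : ℕ, f =O[atTop] fun t => t ^ (d : ℤ) := by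
  obtain ⟨d, C, -, hC⟩ := h
  refine ⟨d, IsBigO.of_bound C ?_⟩
  filter_upwards [hC, eventually_ge_atTop 0] with t ht ht0
  rwa [Real.norm_eq_abs, Real.norm_eq_abs, zpow_natCast, abs_of_nonneg (pow_nonneg ht0 d)]

/-- **Lemma A.1.** If `f` belongs to a Hardy field, has polynomial growth, and takes integer
values at all sufficiently large natural numbers, then `f` eventually agrees with a real
polynomial. -/
theorem hardy_integer_valued_eventually_polynomial
    (H : Subring RGerm) (hH : IsHardyField H)
    (f : ℝ → ℝ) (hf : (f : RGerm) ∈ H) (hgrowth : PolyGrowth f)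
    (hint : ∃ n₀ : ℕ, ∀ n : ℕ, n₀ ≤ n → ∃ z : ℤ, f n = z) :
    ∃ p : Polynomial ℝ, ∀ᶠ t in atTop, f t = p.eval t := by
  obtain ⟨d, hfd⟩ := hgrowth.exists_isBigO_zpow
  obtain ⟨g, hg, hfg, hgH⟩ := hH.exists_isDerivChain hf
  have hmono : ∀ j, ∃ c, MonotoneOn (g j) (Ici c) ∨ AntitoneOn (g j) (Ici c) :=
    fun j => hH.exists_monotoneOn_or_antitoneOn (hg j) (hgH (j + 1))
  have hsmall : Tendsto (g (d + 1)) atTop (𝓝 0) :=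
    (hg.isBigO_zpow_sub hmono (hfg.symm.trans_isBigO hfd) (d + 1)).trans_tendsto
      (tendsto_zpow_atTop_zero (by omega))
  have hgint : ∀ᶠ n : ℕ in atTop, ∃ z : ℤ, g 0 n = z := by
    filter_upwards [eventually_atTop.2 hint, tendsto_natCast_atTop_atTop.eventually hfg]
      with n hn hfn
    rwa [← hfn]
  have hzero : g (d + 1) =ᶠ[atTop] 0 :=
    (hH.eventuallyEq_zero_or_eventually_ne_zero (hgH (d + 1))).resolve_right
      (hg.frequently_eq_zero hgint hsmall)
  obtain ⟨p, hp⟩ := hg.exists_polynomial_of_eventuallyEq_zero hzero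
  exact ⟨p, hfg.trans hp⟩
end

section
/- Let ℋ be a Hardy field and let f : ℝ → ℝ belong to ℋ with log(t) ≺ f(t) ≺ t (so f(t) → ∞ and f is eventually strictly increasing). Let g : ℝ → ℝ be an eventual compositional inverse of f, i.e. g is eventually monotone increasing and f(g(t)) = t for all sufficiently large t, and assume the germ of g at +∞ belongs to some Hardy field. Then g has sub-exponential growth: for every c > 1, g(t)/c^t → 0 as t → ∞ (equivalently, g(t+1)/g(t) → 1). (Lemma A.3 of the paper; the membership of the inverse in a Hardy field is the standing fact used in its proof.) -/
open Filter Topology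

/-- **Lemma A.3.** If `f` belongs to a Hardy field and `log t ≺ f(t) ≺ t`, then any eventual
compositional inverse `g` of `f` whose germ lies in some Hardy field has sub-exponential
growth: `g(t)/cᵗ → 0` for every `c > 1`. -/
theorem inverse_of_sublinear_hardy_subexponential
    (H : Subring RGerm) (hH : IsHardyField H)
    (f : ℝ → ℝ) (hf : (f : RGerm) ∈ H)
    (hlog : GrowsSlower Real.log f) (hsub : GrowsSlower f (fun t => t))
    (g : ℝ → ℝ)
    (hmono : ∃ t₀ : ℝ, MonotoneOn g (Set.Ici t₀))
    (hinv : ∀ᶠ t in atTop, f (g t) = t)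
    (hgH : ∃ H' : Subring RGerm, IsHardyField H' ∧ (g : RGerm) ∈ H') :
    ∀ c : ℝ, 1 < c → Tendsto (fun t : ℝ => g t / c ^ t) atTop (nhds 0) := by
  intro c hc
  obtain ⟨t₀, hmono⟩ := hmono
  have hc0 : (0:ℝ) < c := lt_trans one_pos hc
  have hlc : 0 < Real.log c := Real.log_pos hc
  set K : ℝ := 2 / Real.log c with hK
  have hKpos : 0 < K := by positivity
  -- eventual bound from hlog
  have h1 : ∀ᶠ s in atTop, |Real.log s| / |f s| < K⁻¹ := by
    have := Metric.tendsto_nhds.mp hlog K⁻¹ (by positivity)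
    simpa [Real.dist_eq, abs_div] using this
  obtain ⟨s₀, hs₀⟩ := eventually_atTop.mp h1
  set S : ℝ := max s₀ 1 with hS
  set m : ℝ := g (max t₀ 1) with hm
  -- main eventual bound on |g t|
  have key : ∀ᶠ t in atTop, |g t| ≤ |m| + S + Real.exp (t / K) := by
    filter_upwards [hinv, eventually_ge_atTop (max t₀ 1), eventually_ge_atTop (1:ℝ)]
      with t hft ht ht1
    have hgm : m ≤ g t := hmono (Set.mem_Ici.mpr (le_max_left _ _))
      (Set.mem_Ici.mpr (le_trans (le_max_left _ _) ht)) ht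
    have hup : g t ≤ S + Real.exp (t / K) := by
      rcases le_or_gt (g t) S with h | h
      · have : (0:ℝ) < Real.exp (t / K) := Real.exp_pos _
        linarith
      · have hgt1 : (1:ℝ) < g t := lt_of_le_of_lt (le_max_right _ _) h
        have hbound := hs₀ (g t) (le_of_lt (lt_of_le_of_lt (le_max_left _ _) h))
        rw [hft] at hbound
        have htne : t ≠ 0 := by linarith
        have habs : |Real.log (g t)| < K⁻¹ * |t| := by
          have h0 : (0:ℝ) < |t| := abs_pos.mpr htne
          calc |Real.log (g t)| = |Real.log (g t)| / |t| * |t| := by field_simp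
            _ < K⁻¹ * |t| := mul_lt_mul_of_pos_right hbound h0
        have hlogle : Real.log (g t) ≤ t / K := by
          have : |t| = t := abs_of_pos (by linarith)
          rw [this] at habs
          calc Real.log (g t) ≤ |Real.log (g t)| := le_abs_self _
            _ ≤ K⁻¹ * t := le_of_lt habs
            _ = t / K := by ring
        have : g t ≤ Real.exp (t / K) := by
          calc g t = Real.exp (Real.log (g t)) := (Real.exp_log (by linarith)).symm
            _ ≤ Real.exp (t / K) := Real.exp_le_exp.mpr hlogle
        have hSpos : (0:ℝ) < S := lt_of_lt_of_le one_pos (le_max_right _ _)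
        linarith
    rw [abs_le]
    constructor
    · have h4 : -|m| ≤ m := neg_abs_le m
      have hSpos : (0:ℝ) < S := lt_of_lt_of_le one_pos (le_max_right _ _)
      have h5 : (0:ℝ) < Real.exp (t / K) := Real.exp_pos _
      linarith
    · have h4 : (0:ℝ) ≤ |m| := abs_nonneg m
      linarith
  -- the dominating function tends to zero
  have hdom : Tendsto (fun t : ℝ => (|m| + S + Real.exp (t / K)) / c ^ t) atTop (nhds 0) := by
    have hct : Tendsto (fun t : ℝ => c ^ t) atTop atTop := by
      simp_rw [Real.rpow_def_of_pos hc0]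
      exact Real.tendsto_exp_atTop.comp
        ((tendsto_const_mul_atTop_of_pos hlc).mpr tendsto_id)
    have h2 : Tendsto (fun t : ℝ => (|m| + S) / c ^ t) atTop (nhds 0) :=
      Tendsto.div_atTop tendsto_const_nhds hct
    have h3 : Tendsto (fun t : ℝ => Real.exp (t / K) / c ^ t) atTop (nhds 0) := by
      have heq : ∀ t : ℝ, Real.exp (t / K) / c ^ t = (Real.exp (1 / K) / c) ^ t := by
        intro t
        rw [Real.div_rpow (le_of_lt (Real.exp_pos _)) (le_of_lt hc0),
          Real.rpow_def_of_pos (Real.exp_pos _), Real.log_exp]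
        ring_nf
      have hr0 : (0:ℝ) < Real.exp (1 / K) / c := by positivity
      have hr1 : Real.exp (1 / K) / c < 1 := by
        rw [div_lt_one hc0]
        have h6 : 1 / K < Real.log c := by
          rw [hK, div_div_eq_mul_div, one_mul]
          linarith
        calc Real.exp (1 / K) < Real.exp (Real.log c) := Real.exp_lt_exp.mpr h6
          _ = c := Real.exp_log hc0
      have h7 := tendsto_rpow_atTop_of_base_lt_one (Real.exp (1 / K) / c)
        (by linarith) hr1
      exact h7.congr fun t => (heq t).symm
    have := h2.add h3
    simpa [add_div] using this
  apply squeeze_zero_norm' _ hdom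
  filter_upwards [key] with t h
  have hcpos : (0:ℝ) < c ^ t := Real.rpow_pos_of_pos hc0 t
  rw [Real.norm_eq_abs, abs_div, abs_of_pos hcpos]
  gcongr
end
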